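/- For every irrational α and every integer M ≥ 1, (1/M) ∑_{N=0}^{M-1} log P_N(α) = ∑_{m=1}^∞ (1/(2m)) (1 - sin²(πMmα)/(M sin²(πmα))), where P_N(α) = ∏_{n=1}^N |2 sin(πnα)| and P_0(α) = 1. -/

import Mathlib

/-!
Since `∑ zᵐ/m = -log (1 - z)` for `‖z‖ < 1`, and the series still converges on the unit circle
away from `z = 1` (Dirichlet's test), Abel's limit theorem gives
`∑ₘ cos (2πmθ)/m = -log |2 sin πθ|` for `θ ∉ ℤ`. Hence
`log P_N(α) = -∑ₘ (1/m) ∑_{n ≤ N} cos (2πmnα)`, and averaging over `N < M` turns the Dirichlet kernels `∑_{n ≤ N} cos (2nx)` into the Fejér kernel: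
`∑_{N < M} ∑_{n ≤ N} cos (2nx) = (sin² (Mx) / sin² x - M) / 2` at `x = πmα`.
-/

open Filter Finset Topology

theorem norm_geom_sum_le_of_norm_le_one {𝕜 : Type*} [NormedField 𝕜] {z : 𝕜} (hz : ‖z‖ ≤ 1)
    (hz1 : z ≠ 1) (n : ℕ) : ‖∑ i ∈ range n, z ^ i‖ ≤ 2 / ‖1 - z‖ := by
  have hpos : 0 < ‖1 - z‖ := norm_pos_iff.mpr (sub_ne_zero.mpr hz1.symm)
  rw [geom_sum_eq hz1, norm_div, norm_sub_rev z]
  gcongr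
  calc ‖z ^ n - 1‖ ≤ ‖z ^ n‖ + ‖(1 : 𝕜)‖ := norm_sub_le _ _
    _ ≤ 1 + 1 := by rw [norm_pow, norm_one]; gcongr; exact pow_le_one₀ (norm_nonneg z) hz
    _ = 2 := one_add_one_eq_two

namespace Complex

theorem one_sub_mem_slitPlane_of_norm_le_one {z : ℂ} (hz : ‖z‖ ≤ 1) (hz1 : z ≠ 1) :
    1 - z ∈ slitPlane := by
  refine Or.inl (sub_pos.mpr (((re_le_norm z).trans hz).lt_of_ne fun hre => hz1 ?_))
  have him : z.im = 0 := abs_re_eq_norm.mp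
    (le_antisymm (abs_re_le_norm z) (by rw [hre, abs_one]; exact hz))
  exact ext hre him

theorem cauchySeq_sum_range_pow_succ_div {z : ℂ} (hz : ‖z‖ ≤ 1) (hz1 : z ≠ 1) :
    CauchySeq fun n => ∑ i ∈ range n, z ^ (i + 1) / (i + 1) := by
  have hanti : Antitone fun i : ℕ => 1 / ((i : ℝ) + 1) :=
    fun a b hab => one_div_le_one_div_of_le (by positivity)
      (by exact_mod_cast Nat.add_le_add_right hab 1)
  have hbound (n : ℕ) : ‖∑ i ∈ range n, z ^ (i + 1)‖ ≤ 2 / ‖1 - z‖ := by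
    simp_rw [pow_succ, ← sum_mul, norm_mul]
    exact (mul_le_of_le_one_right (norm_nonneg _) hz).trans
      (norm_geom_sum_le_of_norm_le_one hz hz1 n)
  convert hanti.cauchySeq_series_mul_of_tendsto_zero_of_bounded
    tendsto_one_div_add_atTop_nhds_zero_nat hbound using 3 with n i
  rw [real_smul]
  push_cast
  ring

theorem tendsto_sum_range_pow_succ_div {z : ℂ} (hz : ‖z‖ ≤ 1) (hz1 : z ≠ 1) :
    Tendsto (fun n => ∑ i ∈ range n, z ^ (i + 1) / (i + 1)) atTop (𝓝 (-log (1 - z))) := by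
  obtain ⟨l, hl⟩ := cauchySeq_tendsto_of_complete (cauchySeq_sum_range_pow_succ_div hz hz1)
  have hshift : Tendsto (fun n => ∑ i ∈ range n, z ^ i / i) atTop (𝓝 l) := by
    rw [← tendsto_add_atTop_iff_nat 1]
    simpa [sum_range_succ'] using hl
  have habel := tendsto_tsum_powerSeries_nhdsWithin_lt hshift
  have hcont : ContinuousAt (fun w => -log (1 - w * z)) 1 := by
    refine (ContinuousAt.comp (g := log) ?_ (by fun_prop)).neg
    exact continuousAt_clog (by simpa using one_sub_mem_slitPlane_of_norm_le_one hz hz1)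
  have hle : Tendsto ofReal (𝓝[<] (1 : ℝ)) (𝓝 1) := by
    simpa using (continuous_ofReal.tendsto 1).mono_left nhdsWithin_le_nhds
  have heq : (fun w : ℂ => ∑' n : ℕ, z ^ n / n * w ^ n) =ᶠ[(𝓝[<] (1 : ℝ)).map ofReal]
      fun w => -log (1 - w * z) := by
    rw [EventuallyEq, eventually_map]
    filter_upwards [Ioo_mem_nhdsLT zero_lt_one] with r hr
    have hrz : ‖(r : ℂ) * z‖ < 1 := by
      rw [norm_mul, norm_real, Real.norm_of_nonneg hr.1.le]
      exact (mul_le_of_le_one_right hr.1.le hz).trans_lt hr.2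
    rw [← (hasSum_taylorSeries_neg_log hrz).tsum_eq]
    simp_rw [mul_pow, div_mul_eq_mul_div, mul_comm]
  rw [tendsto_nhds_unique habel ((hcont.tendsto.mono_left hle).congr' heq.symm)] at hl
  simpa using hl

end Complex

namespace Real

theorem tendsto_sum_range_cos_div {θ : ℝ} (hθ : sin (π * θ) ≠ 0) :
    Tendsto (fun n => ∑ i ∈ range n, cos (2 * π * (i + 1) * θ) / (i + 1)) atTop
      (𝓝 (-log (2 * |sin (π * θ)|))) := by
  set z := Complex.exp (Complex.I * (2 * π * θ : ℝ))
  have hnorm : ‖1 - z‖ = 2 * |sin (π * θ)| := by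
    rw [norm_sub_rev, Complex.norm_exp_I_mul_ofReal_sub_one, norm_mul, Real.norm_two, norm_eq_abs]
    ring_nf
  have hz1 : z ≠ 1 := fun h => by simp [h, hθ] at hnorm
  have hlim := (Complex.continuous_re.tendsto _).comp
    (Complex.tendsto_sum_range_pow_succ_div (Complex.norm_exp_I_mul_ofReal _).le hz1)
  rw [Function.comp_def, Complex.neg_re, Complex.log_re, hnorm] at hlim
  refine hlim.congr fun n => ?_
  rw [Complex.re_sum]
  refine sum_congr rfl fun i _ => ?_
  rw [← Complex.exp_nat_mul, show ((i : ℂ) + 1) = ((i + 1 : ℝ) : ℂ) by push_cast; ring,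
    Complex.div_ofReal_re, Nat.cast_succ, show ((i : ℂ) + 1) * (Complex.I * (2 * π * θ : ℝ)) =
      ((2 * π * (i + 1) * θ : ℝ) : ℂ) * Complex.I by push_cast; ring, Complex.exp_ofReal_mul_I_re]

theorem two_sin_mul_sum_range_cos (x : ℝ) (M : ℕ) :
    2 * sin x * ∑ n ∈ range M, cos (2 * (n + 1) * x) = sin ((2 * M + 1) * x) - sin x := by
  induction M with
  | zero => simp
  | succ M ih =>
    rw [sum_range_succ, mul_add, ih]
    push_cast
    have e1 : (2 * ((M : ℝ) + 1) + 1) * x = 2 * (M + 1) * x + x := by ring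
    have e2 : (2 * (M : ℝ) + 1) * x = 2 * (M + 1) * x - x := by ring
    rw [e1, e2, sin_add, sin_sub]
    ring

theorem two_sin_sq_mul_sum_range_sum_range_cos (x : ℝ) (M : ℕ) :
    2 * sin x ^ 2 * ∑ N ∈ range M, ∑ n ∈ range N, cos (2 * (n + 1) * x) =
      sin (M * x) ^ 2 - M * sin x ^ 2 := by
  induction M with
  | zero => simp
  | succ M ih =>
    have hdirichlet : 2 * sin x ^ 2 * ∑ n ∈ range M, cos (2 * (n + 1) * x) =
        sin x * (sin ((2 * M + 1) * x) - sin x) := by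
      linear_combination sin x * two_sin_mul_sum_range_cos x M
    rw [sum_range_succ, mul_add, ih, hdirichlet]
    push_cast
    have e1 : ((M : ℝ) + 1) * x = M * x + x := by ring
    have e2 : (2 * (M : ℝ) + 1) * x = (M * x + x) + M * x := by ring
    rw [e1, e2, sin_add, sin_add, cos_add]
    linear_combination (-sin (M * x) ^ 2) * sin_sq_add_cos_sq x

theorem one_sub_fejer_div_two_eq_sum_range_sum_range_cos {x : ℝ} (hx : sin x ≠ 0) {M : ℕ}
    (hM : M ≠ 0) :
    (1 - sin (M * x) ^ 2 / (M * sin x ^ 2)) / 2 =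
      -(1 / M) * ∑ N ∈ range M, ∑ n ∈ range N, cos (2 * (n + 1) * x) := by
  have hx2 : 2 * sin x ^ 2 ≠ 0 := by positivity
  rw [← mul_div_cancel_left₀ (∑ N ∈ range M, ∑ n ∈ range N, cos (2 * (n + 1) * x)) hx2,
    two_sin_sq_mul_sum_range_sum_range_cos]
  field_simp
  ring

end Real

theorem Irrational.sin_pi_mul_ne_zero {x : ℝ} (hx : Irrational x) : Real.sin (Real.pi * x) ≠ 0 := by
  rw [Ne, Real.sin_eq_zero_iff]
  rintro ⟨n, hn⟩
  exact hx.ne_int n (mul_left_cancel₀ Real.pi_ne_zero (by linarith))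

open Real in
theorem stmt6 (α : ℝ) (hα : Irrational α) (M : ℕ) (hM : 1 ≤ M) :
    Filter.Tendsto (fun K : ℕ => ∑ m ∈ Finset.range K,
        (1 / (2 * ((m : ℝ) + 1))) *
          (1 - Real.sin (Real.pi * (M : ℝ) * ((m : ℝ) + 1) * α) ^ 2 /
                ((M : ℝ) * Real.sin (Real.pi * ((m : ℝ) + 1) * α) ^ 2)))
      Filter.atTop
      (nhds ((1 / (M : ℝ)) * ∑ N ∈ Finset.range M,
        Real.log (∏ n ∈ Finset.range N, |2 * Real.sin (Real.pi * ((n : ℝ) + 1) * α)|))) := by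
  have hsin (n : ℕ) : sin (π * ((n + 1) * α)) ≠ 0 := by
    simpa using (hα.natCast_mul n.succ_ne_zero).sin_pi_mul_ne_zero
  have hterm (m : ℕ) : 1 / (2 * ((m : ℝ) + 1)) *
      (1 - sin (π * M * (m + 1) * α) ^ 2 / (M * sin (π * (m + 1) * α) ^ 2)) =
        ∑ N ∈ range M, ∑ n ∈ range N,
          -(1 / M) * (cos (2 * π * (m + 1) * ((n + 1) * α)) / (m + 1)) := by
    have hx : sin (π * (m + 1) * α) ≠ 0 := by simpa [mul_assoc] using hsin m
    calc _ = 1 / ((m : ℝ) + 1) * ((1 - sin (M * (π * (m + 1) * α)) ^ 2 /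
            (M * sin (π * (m + 1) * α) ^ 2)) / 2) := by
          rw [mul_comm 2, ← one_div_mul_one_div,
            show π * M * (m + 1) * α = M * (π * (m + 1) * α) by ring]
          ring
      _ = _ := by
        rw [one_sub_fejer_div_two_eq_sum_range_sum_range_cos hx (by omega), mul_sum, mul_sum]
        refine sum_congr rfl fun N _ => ?_
        rw [mul_sum, mul_sum]
        refine sum_congr rfl fun n _ => ?_
        rw [show 2 * π * (m + 1) * ((n + 1) * α) = 2 * (n + 1) * (π * (m + 1) * α) by ring]
        ring
  have hlim := tendsto_finsetSum (range M) fun N _ => tendsto_finsetSum (range N) fun n _ =>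
    (tendsto_sum_range_cos_div (hsin n)).const_mul (-(1 / (M : ℝ)))
  convert hlim using 2 with K
  · simp_rw [hterm, mul_sum]
    rw [sum_comm]
    exact sum_congr rfl fun N _ => sum_comm
  · rw [mul_sum]
    refine sum_congr rfl fun N _ => ?_
    rw [log_prod fun n _ => by simpa [mul_assoc] using hsin n, mul_sum]
    refine sum_congr rfl fun n _ => ?_
    rw [abs_mul, abs_two, mul_assoc]
    ring
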